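/- arXiv:1808.03553 — 4 statements merged into one kernel-verified Lean document; each statement's English description precedes it below -/
import Mathlib

section
/- Let A, B be strings of lengths m and n, let L = LCS(A,B) and Δ = n − L. If every nonzero entry of the density matrix K□ equals 1, then K□ has exactly Δ nonzero entries (pivotal points). -/
variable {α : Type*}

/-- LCS of two lists: the maximum length of a common sublist. -/
noncomputable def LCS (X Y : List α) : ℕ :=
  sSup {k | ∃ Z : List α, Z.length = k ∧ Z.Sublist X ∧ Z.Sublist Y}

/-- `substr S i j` is S[i..j]: the characters of S at (1-based) positions i+1,…,j. -/
def substr (S : List α) (i j : ℕ) : List α := (S.take j).drop i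

/-- The density matrix D□ of a matrix D. -/
def density (D : ℕ → ℕ → ℤ) (i j : ℕ) : ℤ :=
  D i j + D (i - 1) (j - 1) - D (i - 1) j - D i (j - 1)

/-- The all scores matrix K of A and B: K[i,j] = LCS(B[i..j], A) if i ≤ j, else j - i. -/
noncomputable def Kmat (A B : List α) (i j : ℕ) : ℤ :=
  if i ≤ j then (LCS (substr B i j) A : ℤ) else (j : ℤ) - (i : ℤ)

/-- The all scores matrix P of A and B: P[i,j] = LCS(B[i..n], A[0..j]). -/
noncomputable def Pmat (A B : List α) (i j : ℕ) : ℤ :=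
  (LCS (substr B i B.length) (substr A 0 j) : ℤ)

/-- nextmatch(i,σ,B): minimum (1-based) position i' with i < i' ≤ |B| and B[i'] = σ; ⊤ (∞) if none. -/
noncomputable def nextmatch (i : ℕ) (σ : α) (B : List α) : ℕ∞ :=
  sInf {k : ℕ∞ | ∃ k' : ℕ, k = (k' : ℕ∞) ∧ i < k' ∧ k' ≤ B.length ∧ B[k' - 1]? = some σ}

/-- prevmatch(j,σ,B): maximum (1-based) position i' with 1 ≤ i' ≤ j and B[i'] = σ; ⊥ (−∞) if none. -/
noncomputable def prevmatch (j : ℕ) (σ : α) (B : List α) : WithBot ℕ :=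
  sSup {k : WithBot ℕ | ∃ k' : ℕ, k = (k' : WithBot ℕ) ∧ 1 ≤ k' ∧ k' ≤ j ∧ B[k' - 1]? = some σ}

/-! The density matrix telescopes: its sum over `[1:n]²` is
`K[n,n] - K[n,0] - K[0,n] + K[0,0] = 0 + n - L + 0 = Δ`, and since every nonzero entry is `1`,
this sum counts the pivotal points. -/

lemma LCS_nil (A : List α) : LCS [] A = 0 := by
  refine le_antisymm (csSup_le ⟨0, [], rfl, .refl _, List.nil_sublist _⟩ ?_) (Nat.zero_le _)
  rintro k ⟨Z, rfl, hZ, -⟩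
  simp [List.sublist_nil.mp hZ]

lemma LCS_comm (X Y : List α) : LCS X Y = LCS Y X := by
  unfold LCS
  congr 1
  ext k
  constructor <;> rintro ⟨Z, hZ, hX, hY⟩ <;> exact ⟨Z, hZ, hY, hX⟩

lemma LCS_le_length_left (X Y : List α) : LCS X Y ≤ X.length :=
  csSup_le ⟨0, [], rfl, List.nil_sublist _, List.nil_sublist _⟩ fun _ ⟨_, hZ, hX, _⟩ ↦
    hZ ▸ hX.length_le

lemma substr_self (S : List α) (i : ℕ) : substr S i i = [] := by
  simp [substr]

lemma substr_zero_length (S : List α) : substr S 0 S.length = S := by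
  simp [substr]

lemma Kmat_self (A B : List α) (i : ℕ) : Kmat A B i i = 0 := by
  simp [Kmat, substr_self, LCS_nil]

lemma Kmat_zero_length (A B : List α) : Kmat A B 0 B.length = LCS A B := by
  simp [Kmat, substr_zero_length, LCS_comm]

lemma Kmat_left_zero (A B : List α) (i : ℕ) : Kmat A B i 0 = -i := by
  rcases Nat.eq_zero_or_pos i with rfl | hi
  · simpa using Kmat_self A B 0
  · simp [Kmat, hi.ne']

lemma sum_Icc_sub_pred (f : ℕ → ℤ) (n : ℕ) :
    ∑ j ∈ Finset.Icc 1 n, (f j - f (j - 1)) = f n - f 0 := by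
  induction n with
  | zero => simp
  | succ k ih => rw [Finset.sum_Icc_succ_top (by omega), ih]; simp

lemma sum_density (D : ℕ → ℕ → ℤ) (n p : ℕ) :
    ∑ q ∈ Finset.Icc 1 n ×ˢ Finset.Icc 1 p, density D q.1 q.2 =
      D n p - D n 0 - D 0 p + D 0 0 := by
  have hrow (i : ℕ) : ∑ j ∈ Finset.Icc 1 p, density D i j =
      (D i p - D i 0) - (D (i - 1) p - D (i - 1) 0) := by
    rw [← sum_Icc_sub_pred (D i), ← sum_Icc_sub_pred (D (i - 1)), ← Finset.sum_sub_distrib]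
    exact Finset.sum_congr rfl fun j _ ↦ by rw [density]; ring
  rw [Finset.sum_product, Finset.sum_congr rfl fun i _ ↦ hrow i,
    sum_Icc_sub_pred (fun i ↦ D i p - D i 0)]
  ring

lemma sum_eq_card_filter_ne_zero {ι : Type*} {s : Finset ι} {f : ι → ℤ}
    (hf : ∀ x ∈ s, f x ≠ 0 → f x = 1) : ∑ x ∈ s, f x = (s.filter (f · ≠ 0)).card := by
  rw [← Finset.sum_filter_ne_zero, Finset.card_eq_sum_ones, Nat.cast_sum]
  refine Finset.sum_congr rfl fun x hx ↦ ?_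
  rw [Finset.mem_filter] at hx
  simp [hf x hx.1 hx.2]

open scoped Classical in
theorem stmt_2_general {α : Type*} (A B : List α) (n : ℕ)
    (hB : B.length = n)
    (hMonge : ∀ i ∈ Finset.Icc 1 n, ∀ j ∈ Finset.Icc 1 n,
      density (Kmat A B) i j ≠ 0 → density (Kmat A B) i j = 1) :
    (((Finset.Icc 1 n) ×ˢ (Finset.Icc 1 n)).filter
      (fun p => density (Kmat A B) p.1 p.2 ≠ 0)).card = n - LCS A B := by
  subst hB
  have hsum := sum_density (Kmat A B) B.length B.length
  rw [sum_eq_card_filter_ne_zero fun q hq ↦ hMonge q.1 (Finset.mem_product.mp hq).1 q.2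
    (Finset.mem_product.mp hq).2, Kmat_self, Kmat_self, Kmat_zero_length, Kmat_left_zero] at hsum
  have hle : LCS A B ≤ B.length := LCS_comm A B ▸ LCS_le_length_left B A
  omega

open scoped Classical in
/-- if every nonzero entry of K□ equals 1, then K□ has exactly
Δ = n − LCS(A,B) nonzero entries (pivotal points). -/
theorem stmt_2 {α : Type*} (A B : List α) (m n : ℕ)
    (hA : A.length = m) (hB : B.length = n)
    (hMonge : ∀ i ∈ Finset.Icc 1 n, ∀ j ∈ Finset.Icc 1 n,
      density (Kmat A B) i j ≠ 0 → density (Kmat A B) i j = 1) :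
    (((Finset.Icc 1 n) ×ˢ (Finset.Icc 1 n)).filter
      (fun p => density (Kmat A B) p.1 p.2 ≠ 0)).card = n - LCS A B :=
  stmt_2_general A B n hB hMonge
end

section
/- Let A, B be strings of lengths m and n, σ a character, and let K' be the all scores matrix of σA (σ prepended to A) and B. Then for all 0 ≤ i ≤ j ≤ n: if k = nextmatch(i,σ,B) < ∞ then K'[i,j] = max( K[i,j], K[k,j] + 1 ), and if nextmatch(i,σ,B) = ∞ then K'[i,j] = K[i,j]. -/
/-
Write S = B[i..j]. If σ does not occur in S, a common subsequence of S and σA cannot use the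
leading σ of σA, so LCS(S, σA) = LCS(S, A). Otherwise its first occurrence is at position
k = nextmatch(i,σ,B), i.e. S = S₁ σ S₂ with σ ∉ S₁ and S₂ = B[k..j]. A common subsequence of S and
σA either avoids the leading σ of σA, or starts with it and may then be matched greedily to the
first σ of S; the rest is a common subsequence of S₂ and A. Hence
LCS(S, σA) = max(LCS(S, A), LCS(S₂, A) + 1). When k > j the second term is j - k + 1 ≤ 0.
-/

variable {α : Type*}

section LCS

lemma bddAbove_commonSublistLengths (X Y : List α) :
    BddAbove {k | ∃ Z : List α, Z.length = k ∧ Z.Sublist X ∧ Z.Sublist Y} :=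
  ⟨X.length, by rintro k ⟨Z, rfl, hX, -⟩; exact hX.length_le⟩

lemma List.Sublist.length_le_LCS {Z X Y : List α} (hX : Z.Sublist X) (hY : Z.Sublist Y) :
    Z.length ≤ LCS X Y :=
  le_csSup (bddAbove_commonSublistLengths X Y) ⟨Z, rfl, hX, hY⟩

lemma exists_sublist_length_eq_LCS (X Y : List α) :
    ∃ Z : List α, Z.length = LCS X Y ∧ Z.Sublist X ∧ Z.Sublist Y :=
  Nat.sSup_mem (s := {k | ∃ Z : List α, Z.length = k ∧ Z.Sublist X ∧ Z.Sublist Y})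
    ⟨0, [], rfl, List.nil_sublist _, List.nil_sublist _⟩ (bddAbove_commonSublistLengths X Y)

lemma LCS_le_of_forall {X Y : List α} {c : ℕ}
    (h : ∀ Z : List α, Z.Sublist X → Z.Sublist Y → Z.length ≤ c) : LCS X Y ≤ c := by
  obtain ⟨Z, hZ, hX, hY⟩ := exists_sublist_length_eq_LCS X Y
  exact hZ ▸ h Z hX hY

lemma LCS_le_LCS_cons (S A : List α) (σ : α) : LCS S A ≤ LCS S (σ :: A) := by
  obtain ⟨Z, hZ, hS, hA⟩ := exists_sublist_length_eq_LCS S A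
  exact hZ ▸ hS.length_le_LCS (hA.trans (List.sublist_cons_self σ A))

lemma LCS_cons_of_notMem {S : List α} {σ : α} (h : σ ∉ S) (A : List α) :
    LCS S (σ :: A) = LCS S A := by
  refine le_antisymm (LCS_le_of_forall fun Z hS hA => ?_) (LCS_le_LCS_cons S A σ)
  rcases List.sublist_cons_iff.mp hA with hA | ⟨Z', rfl, -⟩
  · exact hS.length_le_LCS hA
  · exact absurd (hS.mem List.mem_cons_self) h

lemma List.sublist_of_cons_sublist_append_cons {σ : α} {Z S₁ S₂ : List α} (hσ : σ ∉ S₁)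
    (h : (σ :: Z).Sublist (S₁ ++ σ :: S₂)) : Z.Sublist S₂ := by
  obtain ⟨Z₁, Z₂, hZ, hZ₁, hZ₂⟩ := List.sublist_append_iff.mp h
  rcases Z₁ with _ | ⟨τ, Z₁⟩
  · rw [List.nil_append] at hZ
    exact List.cons_sublist_cons.mp (hZ ▸ hZ₂)
  · obtain ⟨rfl, -⟩ := List.cons_eq_cons.mp hZ
    exact absurd (hZ₁.mem List.mem_cons_self) hσ

lemma LCS_append_cons_cons {σ : α} {S₁ : List α} (hσ : σ ∉ S₁) (S₂ A : List α) :
    LCS (S₁ ++ σ :: S₂) (σ :: A) = max (LCS (S₁ ++ σ :: S₂) A) (LCS S₂ A + 1) := by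
  refine le_antisymm (LCS_le_of_forall fun Z hS hA => ?_)
    (max_le (LCS_le_LCS_cons _ _ _) ?_)
  · rcases List.sublist_cons_iff.mp hA with hA | ⟨Z', rfl, hZ'⟩
    · exact le_max_of_le_left (hS.length_le_LCS hA)
    · exact le_max_of_le_right <| Nat.succ_le_succ <|
        (List.sublist_of_cons_sublist_append_cons hσ hS).length_le_LCS hZ'
  · obtain ⟨Z, hZ, hS, hA⟩ := exists_sublist_length_eq_LCS S₂ A
    have hσZ : (σ :: Z).Sublist (S₁ ++ σ :: S₂) :=
      (hS.cons_cons σ).trans (List.sublist_append_right S₁ _)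
    simpa [hZ] using hσZ.length_le_LCS (hA.cons_cons σ)

end LCS

section substr

lemma exists_of_mem_substr {σ : α} {B : List α} {i j : ℕ} (h : σ ∈ substr B i j) :
    ∃ k : ℕ, i < k ∧ k ≤ j ∧ B[k - 1]? = some σ := by
  obtain ⟨t, ht⟩ := List.mem_iff_getElem?.mp h
  rw [substr, List.getElem?_drop, List.getElem?_take] at ht
  split_ifs at ht with hlt
  exact ⟨i + t + 1, by omega, hlt, ht⟩

lemma substr_eq_append {B : List α} {i c j : ℕ} (hic : i ≤ c) (hcj : c ≤ j)
    (hj : j ≤ B.length) : substr B i j = substr B i c ++ substr B c j := by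
  have hc : (B.take c).length = c := by simp; omega
  rw [substr, ← List.take_append_drop c (B.take j), List.drop_append, List.take_take,
    min_eq_left hcj, hc, Nat.sub_eq_zero_of_le hic, List.drop_zero, substr, substr]

lemma substr_eq_cons {σ : α} {B : List α} {c j : ℕ} (hcj : c < j) (hc : B[c]? = some σ) :
    substr B c j = σ :: substr B (c + 1) j := by
  have hcB : c < B.length := (List.getElem?_eq_some_iff.mp hc).1
  rw [substr, List.drop_eq_getElem_cons (by simp; omega), List.getElem_take,
    (List.getElem?_eq_some_iff.mp hc).2]
  rfl

end substr

section nextmatch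

lemma nextmatch_spec {i k : ℕ} {σ : α} {B : List α} (h : nextmatch i σ B = (k : ℕ∞)) :
    i < k ∧ k ≤ B.length ∧ B[k - 1]? = some σ := by
  set s : Set ℕ∞ :=
    {x : ℕ∞ | ∃ k' : ℕ, x = (k' : ℕ∞) ∧ i < k' ∧ k' ≤ B.length ∧ B[k' - 1]? = some σ}
  have hs : s.Nonempty := by
    by_contra hs
    rw [Set.not_nonempty_iff_eq_empty] at hs
    simp [nextmatch, s, hs] at h
  obtain ⟨k', hk', hspec⟩ : sInf s ∈ s := csInf_mem hs
  obtain rfl : k = k' := by exact_mod_cast h.symm.trans hk'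
  exact hspec

lemma notMem_substr_of_lt_nextmatch {i j : ℕ} {σ : α} {B : List α} (hj : j ≤ B.length)
    (h : (j : ℕ∞) < nextmatch i σ B) : σ ∉ substr B i j := by
  intro hmem
  obtain ⟨k, hik, hkj, hk⟩ := exists_of_mem_substr hmem
  have : nextmatch i σ B ≤ k := sInf_le ⟨k, rfl, hik, hkj.trans hj, hk⟩
  exact absurd (h.trans_le this) (by exact_mod_cast hkj.not_gt)

end nextmatch

section Kmat

lemma Kmat_of_le {A B : List α} {i j : ℕ} (hij : i ≤ j) :
    Kmat A B i j = LCS (substr B i j) A := if_pos hij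

lemma Kmat_of_lt {A B : List α} {i j : ℕ} (hji : j < i) : Kmat A B i j = j - i :=
  if_neg hji.not_ge

lemma Kmat_cons_of_notMem {A B : List α} {σ : α} {i j : ℕ} (hij : i ≤ j)
    (hσ : σ ∉ substr B i j) : Kmat (σ :: A) B i j = Kmat A B i j := by
  rw [Kmat_of_le hij, Kmat_of_le hij, LCS_cons_of_notMem hσ]

lemma Kmat_cons_of_first_occurrence {A B : List α} {σ : α} {i c j : ℕ} (hic : i ≤ c)
    (hcj : c < j) (hj : j ≤ B.length) (hc : B[c]? = some σ) (hσ : σ ∉ substr B i c) :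
    Kmat (σ :: A) B i j = max (Kmat A B i j) (Kmat A B (c + 1) j + 1) := by
  have hsplit : substr B i j = substr B i c ++ σ :: substr B (c + 1) j := by
    rw [substr_eq_append hic hcj.le hj, substr_eq_cons hcj hc]
  rw [Kmat_of_le (hic.trans hcj.le), Kmat_of_le (hic.trans hcj.le), Kmat_of_le hcj, hsplit,
    LCS_append_cons_cons hσ]
  push_cast
  rfl

end Kmat

theorem stmt_4_general {α : Type*} (A B : List α) (n : ℕ)
    (hB : B.length = n) (σ : α) :
    ∀ i j : ℕ, i ≤ j → j ≤ n →
      (∀ k : ℕ, nextmatch i σ B = (k : ℕ∞) →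
        Kmat (σ :: A) B i j = max (Kmat A B i j) (Kmat A B k j + 1)) ∧
      (nextmatch i σ B = ⊤ → Kmat (σ :: A) B i j = Kmat A B i j) := by
  subst hB
  intro i j hij hjn
  refine ⟨fun k hk => ?_, fun htop => Kmat_cons_of_notMem hij
    (notMem_substr_of_lt_nextmatch hjn (htop ▸ ENat.natCast_lt_top j))⟩
  obtain ⟨hik, -, hkσ⟩ := nextmatch_spec hk
  obtain ⟨c, rfl⟩ : ∃ c, k = c + 1 := ⟨k - 1, by omega⟩
  rw [Nat.add_sub_cancel] at hkσ
  by_cases hcj : c < j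
  · refine Kmat_cons_of_first_occurrence (by omega) hcj hjn hkσ
      (notMem_substr_of_lt_nextmatch (by omega) ?_)
    rw [hk]; exact_mod_cast c.lt_succ_self
  · have hσ : σ ∉ substr B i j :=
      notMem_substr_of_lt_nextmatch hjn (by rw [hk]; norm_cast; omega)
    rw [Kmat_cons_of_notMem hij hσ, Kmat_of_lt (by omega : j < c + 1), max_eq_left]
    rw [Kmat_of_le hij]
    omega

/-- effect of prepending σ to A on the all scores matrix K. -/
theorem stmt_4 {α : Type*} (A B : List α) (m n : ℕ)
    (hA : A.length = m) (hB : B.length = n) (σ : α) :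
    ∀ i j : ℕ, i ≤ j → j ≤ n →
      (∀ k : ℕ, nextmatch i σ B = (k : ℕ∞) →
        Kmat (σ :: A) B i j = max (Kmat A B i j) (Kmat A B k j + 1)) ∧
      (nextmatch i σ B = ⊤ → Kmat (σ :: A) B i j = Kmat A B i j) :=
  stmt_4_general A B n hB σ
end

section
/- Let A, B be strings of lengths m and n and σ a character. Then for all 0 ≤ i ≤ n and 0 ≤ j ≤ m: LCS(B[i..n], σ·A[0..j]) = max( LCS(B[i..n], A[0..j]), LCS(B[k..n], A[0..j]) + 1 ) if k = nextmatch(i,σ,B) < ∞, and LCS(B[i..n], σ·A[0..j]) = LCS(B[i..n], A[0..j]) if nextmatch(i,σ,B) = ∞. Here σ·A[0..j] denotes the string A[0..j] with σ prepended. -/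
/-!
A longest common subsequence of `B[i..n]` and `σ·A[0..j]` either skips the leading `σ`, and is
then common to `B[i..n]` and `A[0..j]`, or uses it. In the latter case the `σ` may be matched to its
first occurrence in `B[i..n]`, at position `k = nextmatch(i,σ,B)`, and the rest is common to
`B[k..n]` and `A[0..j]`; with no occurrence at all only the first case is possible.
-/

variable {α : Type*}

namespace LCS

lemma bddAbove (X Y : List α) :
    BddAbove {k | ∃ Z : List α, Z.length = k ∧ Z.Sublist X ∧ Z.Sublist Y} :=
  ⟨X.length, fun _ ⟨_, hZ, hX, _⟩ => hZ ▸ hX.length_le⟩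

lemma length_le {Z X Y : List α} (hX : Z.Sublist X) (hY : Z.Sublist Y) :
    Z.length ≤ LCS X Y :=
  le_csSup (bddAbove X Y) ⟨Z, rfl, hX, hY⟩

lemma exists_sublist (X Y : List α) :
    ∃ Z : List α, Z.length = LCS X Y ∧ Z.Sublist X ∧ Z.Sublist Y :=
  Nat.sSup_mem (by exact ⟨0, [], rfl, List.nil_sublist _, List.nil_sublist _⟩) (bddAbove X Y)

lemma mono {X X' Y Y' : List α} (hX : X.Sublist X') (hY : Y.Sublist Y') :
    LCS X Y ≤ LCS X' Y' := by
  obtain ⟨Z, hZ, hZX, hZY⟩ := exists_sublist X Y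
  exact hZ ▸ length_le (hZX.trans hX) (hZY.trans hY)

lemma cons_right_of_notMem {a : α} {X : List α} (ha : a ∉ X) (Y : List α) :
    LCS X (a :: Y) = LCS X Y := by
  refine le_antisymm ?_ (mono (List.Sublist.refl _) (List.sublist_cons_self a Y))
  obtain ⟨Z, hZ, hZX, hZY⟩ := exists_sublist X (a :: Y)
  rcases List.sublist_cons_iff.mp hZY with hZY | ⟨Z', rfl, -⟩
  · exact hZ ▸ length_le hZX hZY
  · exact absurd (hZX.subset List.mem_cons_self) ha

lemma append_cons_cons_right {a : α} {P : List α} (ha : a ∉ P) (Q Y : List α) :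
    LCS (P ++ a :: Q) (a :: Y) = max (LCS (P ++ a :: Q) Y) (LCS Q Y + 1) := by
  apply le_antisymm
  · obtain ⟨Z, hZ, hZX, hZY⟩ := exists_sublist (P ++ a :: Q) (a :: Y)
    rcases List.sublist_cons_iff.mp hZY with hZY | ⟨Z', rfl, hZ'Y⟩
    · exact le_max_of_le_left (hZ ▸ length_le hZX hZY)
    · obtain ⟨l₁, l₂, hsplit, hl₁, hl₂⟩ := List.sublist_append_iff.mp hZX
      obtain rfl : l₁ = [] := by
        rcases l₁ with _ | ⟨b, l₁⟩
        · rfl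
        · obtain rfl : b = a := (List.cons.inj hsplit).1.symm
          exact absurd (hl₁.subset List.mem_cons_self) ha
      subst hsplit
      have hZ'Q : Z'.Sublist Q := List.cons_sublist_cons.mp hl₂
      exact le_max_of_le_right (hZ ▸ Nat.succ_le_succ (length_le hZ'Q hZ'Y))
  · refine max_le (mono (List.Sublist.refl _) (List.sublist_cons_self a Y)) ?_
    obtain ⟨Z, hZ, hZQ, hZY⟩ := exists_sublist Q Y
    have hQ : (a :: Q).Sublist (P ++ a :: Q) := List.sublist_append_right P _
    exact hZ ▸ length_le ((hZQ.cons_cons a).trans hQ) (hZY.cons_cons a)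

end LCS

section nextmatch

variable {i k : ℕ} {σ : α} {B : List α}

lemma nextmatch_le (hik : i < k) (hkB : k ≤ B.length) (hk : B[k - 1]? = some σ) :
    nextmatch i σ B ≤ k :=
  sInf_le ⟨k, rfl, hik, hkB, hk⟩

lemma nextmatch_mem_of_ne_top (h : nextmatch i σ B ≠ ⊤) :
    nextmatch i σ B ∈
      {k : ℕ∞ | ∃ k' : ℕ, k = k' ∧ i < k' ∧ k' ≤ B.length ∧ B[k' - 1]? = some σ} :=
  csInf_mem (Set.nonempty_iff_ne_empty.mpr fun hempty => h (by rw [nextmatch, hempty, sInf_empty]))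

lemma getElem?_of_nextmatch_eq (h : nextmatch i σ B = k) :
    i < k ∧ B[k - 1]? = some σ := by
  obtain ⟨k', hk', hik, -, hk⟩ := nextmatch_mem_of_ne_top (h ▸ ENat.natCast_ne_top k)
  obtain rfl : k = k' := by exact_mod_cast h ▸ hk'
  exact ⟨hik, hk⟩

lemma nextmatch_le_of_getElem?_drop {s : ℕ} (h : (B.drop i)[s]? = some σ) :
    nextmatch i σ B ≤ (i + s + 1 : ℕ) := by
  rw [List.getElem?_drop] at h
  have hlt : i + s < B.length := (List.getElem?_eq_some_iff.mp h).1
  exact nextmatch_le (by omega) hlt (by simpa using h)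

lemma notMem_drop_of_nextmatch_eq_top (h : nextmatch i σ B = ⊤) : σ ∉ B.drop i := by
  intro hσ
  obtain ⟨s, hs⟩ := List.mem_iff_getElem?.mp hσ
  exact ENat.natCast_ne_top _ (top_le_iff.mp (h ▸ nextmatch_le_of_getElem?_drop hs))

lemma drop_eq_append_cons_of_nextmatch_eq (h : nextmatch i σ B = k) :
    ∃ P, σ ∉ P ∧ B.drop i = P ++ σ :: B.drop k := by
  obtain ⟨hik, hk⟩ := getElem?_of_nextmatch_eq h
  obtain ⟨hkB, hkσ⟩ := List.getElem?_eq_some_iff.mp hk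
  refine ⟨(B.drop i).take (k - 1 - i), fun hσ => ?_, ?_⟩
  · obtain ⟨s, hs⟩ := List.mem_iff_getElem?.mp hσ
    rw [List.getElem?_take] at hs
    split_ifs at hs with hsk
    have := h ▸ nextmatch_le_of_getElem?_drop hs
    norm_cast at this
    omega
  · have hdrop : (B.drop i).drop (k - 1 - i) = σ :: B.drop k := by
      rw [List.drop_drop, show i + (k - 1 - i) = k - 1 by omega, List.drop_eq_getElem_cons hkB, hkσ,
        show k - 1 + 1 = k by omega]
    rw [← hdrop, List.take_append_drop]

end nextmatch

theorem stmt_12_general {α : Type*} (A B : List α) (m n : ℕ)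
    (hB : B.length = n) (σ : α) :
    ∀ i ≤ n, ∀ j ≤ m,
      (∀ k : ℕ, nextmatch i σ B = (k : ℕ∞) →
        LCS (substr B i n) (σ :: substr A 0 j) =
          max (LCS (substr B i n) (substr A 0 j))
              (LCS (substr B k n) (substr A 0 j) + 1)) ∧
      (nextmatch i σ B = ⊤ →
        LCS (substr B i n) (σ :: substr A 0 j) =
          LCS (substr B i n) (substr A 0 j)) := by
  subst hB
  intro i _ j _
  have suffix (l : ℕ) : substr B l B.length = B.drop l := by simp [substr]
  refine ⟨fun k hk => ?_, fun htop => ?_⟩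
  · obtain ⟨P, hσP, hsplit⟩ := drop_eq_append_cons_of_nextmatch_eq hk
    rw [suffix, suffix, hsplit]
    exact LCS.append_cons_cons_right hσP _ _
  · rw [suffix]
    exact LCS.cons_right_of_notMem (notMem_drop_of_nextmatch_eq_top htop) _

/-- effect of prepending σ to A[0..j] on LCS with suffixes of B. -/
theorem stmt_12 {α : Type*} (A B : List α) (m n : ℕ)
    (hA : A.length = m) (hB : B.length = n) (σ : α) :
    ∀ i ≤ n, ∀ j ≤ m,
      (∀ k : ℕ, nextmatch i σ B = (k : ℕ∞) →
        LCS (substr B i n) (σ :: substr A 0 j) =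
          max (LCS (substr B i n) (substr A 0 j))
              (LCS (substr B k n) (substr A 0 j) + 1)) ∧
      (nextmatch i σ B = ⊤ →
        LCS (substr B i n) (σ :: substr A 0 j) =
          LCS (substr B i n) (substr A 0 j)) :=
  stmt_12_general A B m n hB σ
end

section
/- Let A, B be strings of lengths m and n, σ a character occurring in B, and define Diff[i,j] = LCS(B[i..n], σ·A[0..j]) − P[i,j] for (i,j) ∈ [0:n]×[0:m]. Let i₀ be the minimum index i ∈ [0:n] with nextmatch(i,σ,B) = ∞ (equivalently, i₀ = prevmatch(n,σ,B), the position of the last occurrence of σ in B; since σ occurs in B, i₀ ≥ 1). Then Diff[i₀,0] − Diff[i₀−1,0] = −1, and Diff[i,0] − Diff[i−1,0] = 0 for every i ∈ [1:n] with i ≠ i₀. (These differences are the entries of column 0 of the density matrix of Diff when Diff is extended by the zero column Diff[·,−1] = 0.) -/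
variable {α : Type*}

/-! Column 0 of `Diff` compares `LCS(B[i..n], σ)` with `LCS(B[i..n], ε) = 0`, so it is the
indicator of `σ ∈ B[i..n]`, i.e. of `i < i₀`; its vertical differences vanish except at `i₀`. -/

section LCS

variable {X Y : List α}

lemma le_LCS {Z : List α} (hX : Z.Sublist X) (hY : Z.Sublist Y) : Z.length ≤ LCS X Y :=
  le_csSup ⟨Y.length, fun _ ⟨_, hk, _, hZY⟩ => hk ▸ hZY.length_le⟩ ⟨Z, rfl, hX, hY⟩

lemma LCS_le {k : ℕ} (h : ∀ Z : List α, Z.Sublist X → Z.Sublist Y → Z.length ≤ k) :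
    LCS X Y ≤ k :=
  csSup_le ⟨0, [], rfl, List.nil_sublist _, List.nil_sublist _⟩
    fun _ ⟨Z, hk, hX, hY⟩ => hk ▸ h Z hX hY

lemma LCS_le_length_right : LCS X Y ≤ Y.length :=
  LCS_le fun _ _ hY => hY.length_le

lemma LCS_nil_right : LCS X [] = 0 :=
  Nat.le_zero.mp LCS_le_length_right

lemma LCS_singleton_right_of_mem {σ : α} (h : σ ∈ X) : LCS X [σ] = 1 :=
  le_antisymm LCS_le_length_right
    (le_LCS (List.singleton_sublist.mpr h) (List.Sublist.refl _))

lemma LCS_singleton_right_of_not_mem {σ : α} (h : σ ∉ X) : LCS X [σ] = 0 := by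
  refine Nat.le_zero.mp (LCS_le fun Z hX hσ => ?_)
  rcases List.sublist_singleton.mp hσ with rfl | rfl
  · rfl
  · exact absurd (List.singleton_sublist.mp hX) h

end LCS

lemma nextmatch_eq_top_iff {i : ℕ} {σ : α} {B : List α} :
    nextmatch i σ B = ⊤ ↔ σ ∉ B.drop i := by
  rw [nextmatch, sInf_eq_top]
  constructor
  · intro h hmem
    obtain ⟨j, hj, hget⟩ := List.mem_drop_iff_getElem.mp hmem
    exact ENat.natCast_ne_top _
      (h _ ⟨i + j + 1, rfl, by omega, by omega, by simp [List.getElem?_eq_some_iff, hget]; omega⟩)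
  · rintro h _ ⟨k, rfl, hik, hkB, hk⟩
    refine absurd (List.mem_drop_iff_getElem.mpr ⟨k - 1 - i, by omega, ?_⟩) h
    obtain ⟨_, hk⟩ := List.getElem?_eq_some_iff.mp hk
    rw [← hk]
    congr 1
    omega

lemma mem_drop_iff_lt_of_nextmatch {σ : α} {B : List α} {i₀ : ℕ}
    (hi₀ : nextmatch i₀ σ B = ⊤) (hi₀min : ∀ i < i₀, nextmatch i σ B ≠ ⊤) (i : ℕ) :
    σ ∈ B.drop i ↔ i < i₀ := by
  constructor
  · intro hmem
    by_contra hle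
    exact nextmatch_eq_top_iff.mp hi₀ (List.drop_subset_drop_left B (not_lt.mp hle) hmem)
  · intro hlt
    by_contra hnot
    exact hi₀min i hlt (nextmatch_eq_top_iff.mpr hnot)

lemma LCS_cons_col_zero_sub_Pmat (A B : List α) (σ : α) (i : ℕ) :
    (LCS (substr B i B.length) (σ :: substr A 0 0) : ℤ) - Pmat A B i 0 = LCS (B.drop i) [σ] := by
  simp [Pmat, substr, LCS_nil_right]

theorem stmt_16_general {α : Type*} (A B : List α) (n : ℕ)
    (hB : B.length = n) (σ : α) (hσ : σ ∈ B)
    (i₀ : ℕ) (hi₀ : nextmatch i₀ σ B = ⊤)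
    (hi₀min : ∀ i < i₀, nextmatch i σ B ≠ ⊤) :
    (((LCS (substr B i₀ n) (σ :: substr A 0 0) : ℤ) - Pmat A B i₀ 0) -
      ((LCS (substr B (i₀ - 1) n) (σ :: substr A 0 0) : ℤ) - Pmat A B (i₀ - 1) 0)
        = -1) ∧
    (∀ i, 1 ≤ i → i ≤ n → i ≠ i₀ →
      ((LCS (substr B i n) (σ :: substr A 0 0) : ℤ) - Pmat A B i 0) -
        ((LCS (substr B (i - 1) n) (σ :: substr A 0 0) : ℤ) - Pmat A B (i - 1) 0)
          = 0) := by
  subst hB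
  have hmem := mem_drop_iff_lt_of_nextmatch hi₀ hi₀min
  have hcol : ∀ i, (LCS (substr B i B.length) (σ :: substr A 0 0) : ℤ) - Pmat A B i 0 =
      if i < i₀ then 1 else 0 := by
    intro i
    rw [LCS_cons_col_zero_sub_Pmat]
    split_ifs with hi
    · rw [LCS_singleton_right_of_mem ((hmem i).mpr hi), Nat.cast_one]
    · rw [LCS_singleton_right_of_not_mem (mt (hmem i).mp hi), Nat.cast_zero]
  have hi₀pos : 0 < i₀ := (hmem 0).mp hσ
  simp only [hcol]
  refine ⟨by simp [hi₀pos], fun i hi _ hne => ?_⟩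
  split_ifs <;> omega

/-- column 0 of the density matrix of Diff: the entry at the
minimum row i₀ with nextmatch(i₀,σ,B) = ∞ equals −1, all other entries are 0. -/
theorem stmt_16 {α : Type*} (A B : List α) (m n : ℕ)
    (hA : A.length = m) (hB : B.length = n) (σ : α) (hσ : σ ∈ B)
    (i₀ : ℕ) (hi₀n : i₀ ≤ n) (hi₀ : nextmatch i₀ σ B = ⊤)
    (hi₀min : ∀ i < i₀, nextmatch i σ B ≠ ⊤) :
    (((LCS (substr B i₀ n) (σ :: substr A 0 0) : ℤ) - Pmat A B i₀ 0) -
      ((LCS (substr B (i₀ - 1) n) (σ :: substr A 0 0) : ℤ) - Pmat A B (i₀ - 1) 0)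
        = -1) ∧
    (∀ i, 1 ≤ i → i ≤ n → i ≠ i₀ →
      ((LCS (substr B i n) (σ :: substr A 0 0) : ℤ) - Pmat A B i 0) -
        ((LCS (substr B (i - 1) n) (σ :: substr A 0 0) : ℤ) - Pmat A B (i - 1) 0)
          = 0) :=
  stmt_16_general A B n hB σ hσ i₀ hi₀ hi₀min
end
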